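/- arXiv:2202.07851 — 5 statements merged into one kernel-verified Lean document; each statement's English description precedes it below -/
import Mathlib

section
/- Let p > 1 be a real number and let η : (0,∞) → [0,∞) be a nonincreasing function. Then (∫₀^∞ η(t)^{1/p} dt)^p ≥ p · ∫₀^∞ η(t) t^{p-1} dt. -/
/-!
Put `g = η ^ (1 / p)` and let `ν = g dt` on `(0, ∞)`, with distribution function
`G t = ν (0, t] = ∫₀ᵗ g`. Since `g` is nonincreasing, `t g(t) ≤ G(t)`, hence
`η(t) t^(p-1) = g(t) (t g(t))^(p-1) ≤ g(t) G(t)^(p-1)`, and `∫ g G^(p-1) dt = ∫ G^(p-1) dν`.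
As `ν` has no atoms, `ν {G > s} ≤ ν(ℝ) - s`: the law of `G` under `ν` has tails dominated by
Lebesgue measure on `(0, ν(ℝ)]`, so by the layer-cake formula
`∫ G^(p-1) dν ≤ ∫₀^{ν(ℝ)} x^(p-1) dx = ν(ℝ)^p / p`.
-/

open MeasureTheory Set Filter Topology
open scoped ENNReal

theorem lintegral_rpow_le_of_meas_lt_le {α β : Type*} [MeasurableSpace α] [MeasurableSpace β]
    {μ : Measure α} {μ' : Measure β} {f : α → ℝ} {g : β → ℝ}
    (hf : 0 ≤ᵐ[μ] f) (hf_meas : AEMeasurable f μ)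
    (hg : 0 ≤ᵐ[μ'] g) (hg_meas : AEMeasurable g μ')
    {q : ℝ} (hq : 0 < q) (h : ∀ s > 0, μ {a | s < f a} ≤ μ' {b | s < g b}) :
    ∫⁻ a, ENNReal.ofReal (f a ^ q) ∂μ ≤ ∫⁻ b, ENNReal.ofReal (g b ^ q) ∂μ' := by
  rw [lintegral_rpow_eq_lintegral_meas_lt_mul μ hf hf_meas hq,
    lintegral_rpow_eq_lintegral_meas_lt_mul μ' hg hg_meas hq]
  refine mul_le_mul_right (setLIntegral_mono' measurableSet_Ioi fun s hs => ?_) _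
  exact mul_le_mul_left (h s hs) _

theorem lintegral_Ioc_rpow {a r : ℝ} (ha : 0 ≤ a) (hr : -1 < r) :
    ∫⁻ x in Ioc 0 a, ENNReal.ofReal (x ^ r) = ENNReal.ofReal (a ^ (r + 1) / (r + 1)) := by
  rw [← ofReal_integral_eq_lintegral_ofReal (intervalIntegral.intervalIntegrable_rpow' hr).1
      (ae_restrict_of_forall_mem measurableSet_Ioc fun x hx => Real.rpow_nonneg hx.1.le r),
    ← intervalIntegral.integral_of_le ha, integral_rpow (Or.inl hr),
    Real.zero_rpow (by linarith), sub_zero]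

section DistributionFunction

variable {ν : Measure ℝ}

theorem exists_measure_Iic_lt [IsFiniteMeasure ν] {s : ℝ≥0∞} (hs : 0 < s) :
    ∃ b, ν (Iic b) < s := by
  have hlim := tendsto_measure_iInter_atBot (μ := ν)
    (fun x => measurableSet_Iic.nullMeasurableSet) monotone_Iic ⟨0, measure_ne_top ν _⟩
  rw [iInter_Iic_eq_empty_iff.mpr (by simp), measure_empty] at hlim
  exact (hlim.eventually (gt_mem_nhds hs)).exists

theorem le_measure_Iic_of_forall_lt [IsFiniteMeasure ν] {s : ℝ≥0∞} {x : ℝ}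
    (h : ∀ t > x, s ≤ ν (Iic t)) : s ≤ ν (Iic x) := by
  have hlim := tendsto_measure_biInter_gt (μ := ν) (a := x)
    (fun r _ => measurableSet_Iic.nullMeasurableSet) (fun i j _ hij => Iic_subset_Iic.2 hij)
    ⟨x + 1, lt_add_one x, measure_ne_top ν _⟩
  have hIic : ⋂ r > x, Iic r = Iic x := by
    ext y
    simpa using ⟨le_of_forall_gt_imp_ge_of_dense, fun hy r hr => hy.trans hr.le⟩
  rw [hIic] at hlim
  exact ge_of_tendsto hlim (eventually_nhdsWithin_of_forall h)

theorem measure_lt_measure_Iic_le [IsFiniteMeasure ν] [NullSingletonClass ν] (s : ℝ≥0∞) :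
    ν {t | s < ν (Iic t)} ≤ ν univ - s := by
  set U := {t | s < ν (Iic t)}
  rcases eq_zero_or_pos s with rfl | hs
  · simpa using measure_mono (subset_univ U)
  rcases U.eq_empty_or_nonempty with hU | hU
  · simp [hU]
  obtain ⟨b, hb⟩ := exists_measure_Iic_lt (ν := ν) hs
  have hU_bdd : BddBelow U := ⟨b, fun t ht => le_of_not_ge fun htb =>
    (ht.trans_le (measure_mono (Iic_subset_Iic.2 htb))).asymm hb⟩
  have hs_le : s ≤ ν (Iic (sInf U)) := le_measure_Iic_of_forall_lt fun t ht => by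
    obtain ⟨u, huU, hut⟩ := exists_lt_of_csInf_lt hU ht
    exact huU.le.trans (measure_mono (Iic_subset_Iic.2 hut.le))
  calc ν U ≤ ν (Ici (sInf U)) := measure_mono fun t ht => csInf_le hU_bdd ht
    _ = ν (Ioi (sInf U)) := measure_congr Ioi_ae_eq_Ici.symm
    _ = ν univ - ν (Iic (sInf U)) := by
        rw [← compl_Iic, measure_compl measurableSet_Iic (measure_ne_top _ _)]
    _ ≤ ν univ - s := tsub_le_tsub_left hs_le _

theorem lintegral_measure_Iic_rpow_le [NullSingletonClass ν] {p : ℝ} (hp : 1 < p) :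
    ENNReal.ofReal p * ∫⁻ t, ν (Iic t) ^ (p - 1) ∂ν ≤ ν univ ^ p := by
  rcases eq_top_or_lt_top (ν univ) with hν | hν
  · simp [hν, ENNReal.top_rpow_of_pos (by linarith : 0 < p)]
  have : IsFiniteMeasure ν := ⟨hν⟩
  set a := ν.real univ
  have h_real (t : ℝ) : ν (Iic t) ^ (p - 1) = ENNReal.ofReal (ν.real (Iic t) ^ (p - 1)) := by
    rw [← ENNReal.ofReal_rpow_of_nonneg measureReal_nonneg (by linarith), ofReal_measureReal]
  have h_mono : Monotone fun t => ν.real (Iic t) := fun s t hst =>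
    measureReal_mono (Iic_subset_Iic.2 hst)
  have h_tail : ∀ s > 0,
      ν {t | s < ν.real (Iic t)} ≤ volume.restrict (Ioc 0 a) {x | s < x} := by
    intro s hs
    have hset : {t | s < ν.real (Iic t)} = {t | ENNReal.ofReal s < ν (Iic t)} := by
      ext t
      exact (ENNReal.ofReal_lt_iff_lt_toReal hs.le (measure_ne_top _ _)).symm
    rw [hset, show {x : ℝ | s < x} = Ioi s from rfl, Measure.restrict_apply measurableSet_Ioi,
      inter_comm, Ioc_inter_Ioi, max_eq_right hs.le, Real.volume_Ioc,
      ENNReal.ofReal_sub _ hs.le, ofReal_measureReal]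
    exact measure_lt_measure_Iic_le _
  have h_unif :
      ∫⁻ t, ν (Iic t) ^ (p - 1) ∂ν ≤ ∫⁻ x in Ioc 0 a, ENNReal.ofReal (x ^ (p - 1)) := by
    simp_rw [h_real]
    exact lintegral_rpow_le_of_meas_lt_le (ae_of_all _ fun _ => measureReal_nonneg)
      h_mono.measurable.aemeasurable
      (ae_restrict_of_forall_mem measurableSet_Ioc fun x hx => hx.1.le)
      measurable_id.aemeasurable (by linarith) h_tail
  calc ENNReal.ofReal p * ∫⁻ t, ν (Iic t) ^ (p - 1) ∂ν
      ≤ ENNReal.ofReal p * ENNReal.ofReal (a ^ p / p) := by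
        gcongr
        rwa [lintegral_Ioc_rpow measureReal_nonneg (by linarith), sub_add_cancel] at h_unif
    _ = ν univ ^ p := by
        rw [← ENNReal.ofReal_mul (by linarith), mul_div_cancel₀ _ (by linarith),
          ← ENNReal.ofReal_rpow_of_nonneg measureReal_nonneg (by linarith),
          ofReal_measureReal]

end DistributionFunction

theorem ofReal_sub_mul_le_setLIntegral_of_antitoneOn {g : ℝ → ℝ≥0∞} {a b : ℝ}
    (hg : AntitoneOn g (Ioc a b)) : ENNReal.ofReal (b - a) * g b ≤ ∫⁻ s in Ioc a b, g s := by
  rcases le_or_gt b a with hba | hab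
  · simp [ENNReal.ofReal_of_nonpos (sub_nonpos.2 hba)]
  calc ENNReal.ofReal (b - a) * g b = ∫⁻ _ in Ioc a b, g b := by
        rw [setLIntegral_const, Real.volume_Ioc, mul_comm]
    _ ≤ ∫⁻ s in Ioc a b, g s :=
        setLIntegral_mono' measurableSet_Ioc fun s hs => hg hs ⟨hab, le_rfl⟩ hs.2

theorem ENNReal.rpow_mul_ofReal_rpow_sub_one {x : ℝ≥0∞} {t p : ℝ} (ht : 0 ≤ t) (hp : 1 ≤ p) :
    x ^ p * ENNReal.ofReal (t ^ (p - 1)) = x * (ENNReal.ofReal t * x) ^ (p - 1) := by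
  have hx : x ^ p = x * x ^ (p - 1) := by
    simpa using ENNReal.rpow_add_of_nonneg (x := x) 1 (p - 1) zero_le_one (sub_nonneg.2 hp)
  rw [hx, ENNReal.mul_rpow_of_nonneg _ _ (sub_nonneg.2 hp),
    ENNReal.ofReal_rpow_of_nonneg ht (sub_nonneg.2 hp), mul_assoc, mul_comm (x ^ (p - 1))]

theorem lintegral_Ioi_rpow_mul_rpow_le_of_antitoneOn {g : ℝ → ℝ≥0∞}
    (hg : AntitoneOn g (Ioi 0)) {p : ℝ} (hp : 1 < p) :
    ENNReal.ofReal p * ∫⁻ t in Ioi 0, g t ^ p * ENNReal.ofReal (t ^ (p - 1)) ≤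
      (∫⁻ t in Ioi 0, g t) ^ p := by
  set ν := (volume.restrict (Ioi 0)).withDensity g
  have hν_mono : Monotone fun t => ν (Iic t) := fun s t hst =>
    measure_mono (Iic_subset_Iic.2 hst)
  have hν_Iic (t : ℝ) : ENNReal.ofReal t * g t ≤ ν (Iic t) := by
    rw [withDensity_apply _ measurableSet_Iic, Measure.restrict_restrict measurableSet_Iic,
      Iic_inter_Ioi]
    simpa using ofReal_sub_mul_le_setLIntegral_of_antitoneOn (hg.mono Ioc_subset_Ioi_self)
  calc ENNReal.ofReal p * ∫⁻ t in Ioi 0, g t ^ p * ENNReal.ofReal (t ^ (p - 1))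
      ≤ ENNReal.ofReal p * ∫⁻ t in Ioi 0, g t * ν (Iic t) ^ (p - 1) := by
        gcongr ENNReal.ofReal p * ?_
        refine setLIntegral_mono' measurableSet_Ioi fun t ht => ?_
        rw [ENNReal.rpow_mul_ofReal_rpow_sub_one (le_of_lt ht) hp.le]
        gcongr
        exact hν_Iic t
    _ = ENNReal.ofReal p * ∫⁻ t, ν (Iic t) ^ (p - 1) ∂ν := by
        rw [lintegral_withDensity_eq_lintegral_mul₀
          (aemeasurable_restrict_of_antitoneOn measurableSet_Ioi hg)
          (hν_mono.measurable.pow_const _).aemeasurable]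
        rfl
    _ ≤ ν univ ^ p := lintegral_measure_Iic_rpow_le hp
    _ = (∫⁻ t in Ioi 0, g t) ^ p := by
        rw [withDensity_apply _ MeasurableSet.univ, Measure.restrict_univ]

/-- **Hardy–Littlewood–Pólya inequality.**
If `p > 1` and `η : (0,∞) → [0,∞)` is nonincreasing, then
`(∫₀^∞ η(t)^{1/p} dt)^p ≥ p · ∫₀^∞ η(t) t^{p-1} dt`,
where all integrals are Lebesgue integrals over `(0,∞)` taken in `ℝ≥0∞`. -/
theorem hardy_littlewood_polya
    (p : ℝ) (hp : 1 < p)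
    (η : ℝ → ℝ)
    (hη_nonneg : ∀ t ∈ Set.Ioi (0 : ℝ), 0 ≤ η t)
    (hη_anti : AntitoneOn η (Set.Ioi (0 : ℝ))) :
    ENNReal.ofReal p * ∫⁻ t in Set.Ioi (0 : ℝ), ENNReal.ofReal (η t * t ^ (p - 1)) ≤
      (∫⁻ t in Set.Ioi (0 : ℝ), ENNReal.ofReal (η t ^ (1 / p))) ^ p := by
  have h_integrand : ∀ t ∈ Ioi (0 : ℝ), ENNReal.ofReal (η t * t ^ (p - 1)) =
      ENNReal.ofReal (η t ^ (1 / p)) ^ p * ENNReal.ofReal (t ^ (p - 1)) := fun t ht => by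
    rw [ENNReal.ofReal_rpow_of_nonneg (Real.rpow_nonneg (hη_nonneg t ht) _) (by linarith),
      one_div, Real.rpow_inv_rpow (hη_nonneg t ht) (by linarith),
      ENNReal.ofReal_mul (hη_nonneg t ht)]
  rw [setLIntegral_congr_fun measurableSet_Ioi h_integrand]
  refine lintegral_Ioi_rpow_mul_rpow_le_of_antitoneOn (fun s hs t ht hst => ?_) hp
  exact ENNReal.ofReal_le_ofReal
    (Real.rpow_le_rpow (hη_nonneg t ht) (hη_anti hs ht hst) (by positivity))
end

section
/- Let n ≥ 7 be an integer and set γ_n := −(n−2)/2 + √(((n−2)/2)² − (n−1)). Let U : (0,1] → ℝ be twice differentiable with U(r) > 0 for every r ∈ (0,1], and suppose that for every r ∈ (0,1] the differential inequality U''(r) + ((n−1)/r)·U'(r) + ((n−1)/r²)·U(r) ≤ 0 holds. Then U(r) ≥ U(1) · r^{γ_n} for every r ∈ (0,1]. -/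
/-!
Put `g = U r^{-γ}` and let `F = r^{n-1} W(r^γ, U) = r^{n-2+γ} (r U' - γ U)` be the weighted
Wronskian of `U` with the solution `r^γ`. Since `r^γ` solves the Euler equation,
`F' = r^{n-1+γ} (U'' + (n-1)/r U' + (n-1)/r² U) ≤ 0`, and `g' = F r^{-β}` with
`β = n - 1 + 2γ = 1 + 2√(((n-2)/2)² - (n-1)) > 1`. If `F(c) > 0` for some `c ≤ 1`, then
`g' ≥ F(c) s^{-β}` on `(0, c]`, which forces `g(s) → -∞` as `s → 0⁺`, contradicting `U > 0`.
Hence `F ≤ 0`, so `g` is antitone on `(0, 1]` and `g(r) ≥ g(1) = U(1)`.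
-/

open Set Filter Topology

section MonotoneOfHasDerivAt

variable {D : Set ℝ} {f f' : ℝ → ℝ}

theorem Convex.monotoneOn_of_hasDerivAt_nonneg (hD : Convex ℝ D)
    (hf : ∀ x ∈ D, HasDerivAt f (f' x) x) (hf' : ∀ x ∈ D, 0 ≤ f' x) : MonotoneOn f D :=
  monotoneOn_of_hasDerivWithinAt_nonneg hD (fun x hx => (hf x hx).continuousAt.continuousWithinAt)
    (fun x hx => (hf x (interior_subset hx)).hasDerivWithinAt) fun x hx => hf' x (interior_subset hx)

theorem Convex.antitoneOn_of_hasDerivAt_nonpos (hD : Convex ℝ D)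
    (hf : ∀ x ∈ D, HasDerivAt f (f' x) x) (hf' : ∀ x ∈ D, f' x ≤ 0) : AntitoneOn f D :=
  antitoneOn_of_hasDerivWithinAt_nonpos hD (fun x hx => (hf x hx).continuousAt.continuousWithinAt)
    (fun x hx => (hf x (interior_subset hx)).hasDerivWithinAt) fun x hx => hf' x (interior_subset hx)

end MonotoneOfHasDerivAt

/-- Otherwise `g(s) ≤ g(c) - a (s^{1-β} - c^{1-β}) / (β - 1) → -∞` as `s → 0⁺`. -/
theorem nonpos_of_hasDerivAt_ge_mul_rpow_neg {g g' : ℝ → ℝ} {a β c : ℝ} (hc : 0 < c)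
    (hβ : 1 < β) (hg : ∀ s ∈ Ioc 0 c, HasDerivAt g (g' s) s) (hg_nonneg : ∀ s ∈ Ioc 0 c, 0 ≤ g s)
    (hg' : ∀ s ∈ Ioc 0 c, a * s ^ (-β) ≤ g' s) : a ≤ 0 := by
  by_contra! ha
  set k := a / (β - 1)
  have hk : 0 < k := div_pos ha (sub_pos.2 hβ)
  have hmono : MonotoneOn (fun s => g s + k * s ^ (1 - β)) (Ioc 0 c) := by
    refine (convex_Ioc 0 c).monotoneOn_of_hasDerivAt_nonneg (f' := fun s => g' s - a * s ^ (-β))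
      (fun s hs => ?_) fun s hs => sub_nonneg.2 (hg' s hs)
    refine ((hg s hs).add
      ((Real.hasDerivAt_rpow_const (p := 1 - β) (Or.inl hs.1.ne')).const_mul k)).congr_deriv ?_
    have hka : k * (β - 1) = a := div_mul_cancel₀ a (sub_pos.2 hβ).ne'
    rw [show 1 - β - 1 = -β by ring]
    linear_combination (-s ^ (-β)) * hka
  have hbound : ∀ s ∈ Ioc 0 c, k * s ^ (1 - β) ≤ g c + k * c ^ (1 - β) := fun s hs => by
    have := hmono hs (right_mem_Ioc.2 hc) hs.2
    linarith [hg_nonneg s hs]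
  have hunbounded : Tendsto (fun s : ℝ => k * s ^ (1 - β)) (𝓝[>] 0) atTop :=
    (tendsto_rpow_neg_nhdsGT_zero (by linarith)).const_mul_atTop hk
  obtain ⟨s, hs_big, hs⟩ :=
    ((hunbounded.eventually_gt_atTop (g c + k * c ^ (1 - β))).and (Ioc_mem_nhdsGT hc)).exists
  exact (hbound s hs).not_gt hs_big

/-- `r^{N-1}` times the Wronskian of `r ↦ r^γ` and `U`. -/
noncomputable def weightedWronskian (N γ : ℝ) (U U' : ℝ → ℝ) (r : ℝ) : ℝ :=
  r ^ (N - 2 + γ) * (r * U' r - γ * U r)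

section Euler

variable {N γ : ℝ} {U U' U'' : ℝ → ℝ} {r : ℝ}

theorem hasDerivAt_weightedWronskian (hγ : γ ^ 2 + (N - 2) * γ + (N - 1) = 0) (hr : 0 < r)
    (hU' : HasDerivAt U (U' r) r) (hU'' : HasDerivAt U' (U'' r) r) :
    HasDerivAt (weightedWronskian N γ U U')
      (r ^ (N - 1 + γ) * (U'' r + ((N - 1) / r) * U' r + ((N - 1) / r ^ 2) * U r)) r := by
  refine ((Real.hasDerivAt_rpow_const (p := N - 2 + γ) (Or.inl hr.ne')).mul
    (((hasDerivAt_id r).mul hU'').sub (hU'.const_mul γ))).congr_deriv ?_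
  have hpow : r ^ (N - 1 + γ) = r ^ (N - 2 + γ - 1) * r ^ 2 := by
    rw [← Real.rpow_two, ← Real.rpow_add hr]
    ring_nf
  have hpow' : r ^ (N - 2 + γ) = r ^ (N - 2 + γ - 1) * r := by
    rw [← Real.rpow_add_one hr.ne', sub_add_cancel]
  rw [hpow, hpow']
  have hA : r ^ 2 * ((N - 1) / r) = (N - 1) * r := by field_simp
  have hB : r ^ 2 * ((N - 1) / r ^ 2) = N - 1 := by field_simp
  simp only [Pi.mul_apply, Pi.sub_apply, id]
  set p := r ^ (N - 2 + γ - 1)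
  linear_combination (-p * U r) * hγ - p * U' r * hA - p * U r * hB

theorem hasDerivAt_mul_rpow_neg (hr : 0 < r) (hU' : HasDerivAt U (U' r) r) :
    HasDerivAt (fun s => U s * s ^ (-γ))
      (weightedWronskian N γ U U' r * r ^ (-(N - 1 + 2 * γ))) r := by
  refine (hU'.mul (Real.hasDerivAt_rpow_const (p := -γ) (Or.inl hr.ne'))).congr_deriv ?_
  have hpow : r ^ (N - 2 + γ) * r ^ (-(N - 1 + 2 * γ)) = r ^ (-γ - 1) := by
    rw [← Real.rpow_add hr]
    ring_nf
  have hpow' : r ^ (-γ) = r ^ (-γ - 1) * r := by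
    rw [← Real.rpow_add_one hr.ne', sub_add_cancel]
  rw [weightedWronskian, hpow', mul_right_comm, hpow]
  ring

/-- `hβ` says that `γ` is the larger of two distinct roots of the indicial equation `hγ`. -/
theorem mul_rpow_le_of_euler_supersolution (hγ : γ ^ 2 + (N - 2) * γ + (N - 1) = 0)
    (hβ : 1 < N - 1 + 2 * γ)
    (hU' : ∀ r ∈ Ioc (0 : ℝ) 1, HasDerivAt U (U' r) r)
    (hU'' : ∀ r ∈ Ioc (0 : ℝ) 1, HasDerivAt U' (U'' r) r)
    (hUpos : ∀ r ∈ Ioc (0 : ℝ) 1, 0 < U r)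
    (hineq : ∀ r ∈ Ioc (0 : ℝ) 1,
      U'' r + ((N - 1) / r) * U' r + ((N - 1) / r ^ 2) * U r ≤ 0) :
    ∀ r ∈ Ioc (0 : ℝ) 1, U 1 * r ^ γ ≤ U r := by
  set F := weightedWronskian N γ U U'
  set β := N - 1 + 2 * γ
  have hF_anti : AntitoneOn F (Ioc 0 1) :=
    (convex_Ioc 0 1).antitoneOn_of_hasDerivAt_nonpos
      (fun r hr => hasDerivAt_weightedWronskian hγ hr.1 (hU' r hr) (hU'' r hr))
      fun r hr => mul_nonpos_of_nonneg_of_nonpos (Real.rpow_nonneg hr.1.le _) (hineq r hr)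
  have hF_nonpos : ∀ c ∈ Ioc (0 : ℝ) 1, F c ≤ 0 := fun c hc =>
    nonpos_of_hasDerivAt_ge_mul_rpow_neg hc.1 hβ
      (fun s hs => hasDerivAt_mul_rpow_neg hs.1 (hU' s ⟨hs.1, hs.2.trans hc.2⟩))
      (fun s hs => (mul_pos (hUpos s ⟨hs.1, hs.2.trans hc.2⟩) (Real.rpow_pos_of_pos hs.1 _)).le)
      fun s hs => mul_le_mul_of_nonneg_right (hF_anti ⟨hs.1, hs.2.trans hc.2⟩ hc hs.2)
        (Real.rpow_nonneg hs.1.le _)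
  have hg_anti : AntitoneOn (fun s => U s * s ^ (-γ)) (Ioc 0 1) :=
    (convex_Ioc 0 1).antitoneOn_of_hasDerivAt_nonpos
      (fun r hr => hasDerivAt_mul_rpow_neg hr.1 (hU' r hr))
      fun r hr => mul_nonpos_of_nonpos_of_nonneg (hF_nonpos r hr) (Real.rpow_nonneg hr.1.le _)
  intro r hr
  have hg : U 1 ≤ U r * r ^ (-γ) := by
    simpa using hg_anti hr (right_mem_Ioc.2 one_pos) hr.2
  calc U 1 * r ^ γ ≤ U r * r ^ (-γ) * r ^ γ :=
        mul_le_mul_of_nonneg_right hg (Real.rpow_nonneg hr.1.le _)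
    _ = U r := by rw [mul_assoc, ← Real.rpow_add hr.1, neg_add_cancel, Real.rpow_zero, mul_one]

end Euler

/-- Growth lower bound for positive supersolutions of the Euler differential inequality:
if `n ≥ 7`, `γₙ = -(n-2)/2 + √(((n-2)/2)² - (n-1))`, and `U > 0` is twice differentiable on
`(0,1]` with `U'' + ((n-1)/r) U' + ((n-1)/r²) U ≤ 0` there, then `U(r) ≥ U(1) · r^{γₙ}`
for all `r ∈ (0,1]`. -/
theorem growth_lower_bound_euler_inequality
    (n : ℕ) (hn : 7 ≤ n)
    (γ : ℝ)
    (hγ : γ = -((n : ℝ) - 2) / 2 + Real.sqrt ((((n : ℝ) - 2) / 2) ^ 2 - ((n : ℝ) - 1)))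
    (U U' U'' : ℝ → ℝ)
    (hU' : ∀ r ∈ Set.Ioc (0 : ℝ) 1, HasDerivAt U (U' r) r)
    (hU'' : ∀ r ∈ Set.Ioc (0 : ℝ) 1, HasDerivAt U' (U'' r) r)
    (hUpos : ∀ r ∈ Set.Ioc (0 : ℝ) 1, 0 < U r)
    (hineq : ∀ r ∈ Set.Ioc (0 : ℝ) 1,
      U'' r + (((n : ℝ) - 1) / r) * U' r + (((n : ℝ) - 1) / r ^ 2) * U r ≤ 0) :
    ∀ r ∈ Set.Ioc (0 : ℝ) 1, U 1 * r ^ γ ≤ U r := by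
  have hn' : (7 : ℝ) ≤ n := by exact_mod_cast hn
  have hdisc : 0 < (((n : ℝ) - 2) / 2) ^ 2 - ((n : ℝ) - 1) := by nlinarith
  have hsqrt := Real.sq_sqrt hdisc.le
  have hquad : γ ^ 2 + ((n : ℝ) - 2) * γ + ((n : ℝ) - 1) = 0 := by
    rw [hγ]
    linear_combination hsqrt
  have hβ : 1 < (n : ℝ) - 1 + 2 * γ := by
    rw [hγ]
    linarith [Real.sqrt_pos.2 hdisc]
  exact mul_rpow_le_of_euler_supersolution hquad hβ hU' hU'' hUpos hineq
end

section
/- Let n ≥ 7 be an integer, and set γ_n := −(n−2)/2 + √(((n−2)/2)² − (n−1)) and β_n := 2√(((n−2)/2)² − (n−1)) > 0. Let U : (0,1] → ℝ be twice differentiable, and define W : [1,∞) → ℝ by W(s) := U(s^{−1/β_n}) · s^{γ_n/β_n}. Then W is twice differentiable on (1,∞), and W''(s) ≤ 0 holds for every s ∈ (1,∞) if and only if U''(r) + ((n−1)/r)·U'(r) + ((n−1)/r²)·U(r) ≤ 0 holds for every r ∈ (0,1). -/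
/-! Write `W s = U (s ^ a) * s ^ c` with `a = -1/β`, `c = γ/β`. Differentiating `V (s ^ a) * s ^ c`
gives `(a r V' r + c V r) * s ^ (c - 1)` with `r = s ^ a`, a function of the same shape, so
`W'' s = (a² r² U'' + a (a + 2c - 1) r U' + c (c - 1) U)(r) * s ^ (c - 2)`. Because `γ` and `γ - β`
are the roots of `γ² + (n - 2) γ + (n - 1)`, these coefficients are `1, n - 1, n - 1` times
`1/β²`, so `W'' s` is a positive multiple of the Euler expression at `r`; and `s ↦ s ^ a` maps
`(1, ∞)` onto `(0, 1)`. -/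

open Set Filter

section RpowSubstitution

variable {a c s : ℝ}

theorem hasDerivAt_comp_rpow_mul_rpow {V V' : ℝ → ℝ} (hs : 0 < s)
    (hV : HasDerivAt V (V' (s ^ a)) (s ^ a)) :
    HasDerivAt (fun t => V (t ^ a) * t ^ c)
      ((a * s ^ a * V' (s ^ a) + c * V (s ^ a)) * s ^ (c - 1)) s := by
  have hpow : ∀ e : ℝ, HasDerivAt (fun t : ℝ => t ^ e) (e * s ^ (e - 1)) s := fun e =>
    Real.hasDerivAt_rpow_const (Or.inl hs.ne')
  refine ((hV.comp s (hpow a)).mul (hpow c)).congr_deriv ?_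
  simp only [Function.comp_apply, Real.rpow_sub hs, Real.rpow_one]
  field_simp

theorem forall_rpow_Ioi_one_iff_of_neg {P : ℝ → Prop} (ha : a < 0) :
    (∀ s ∈ Ioi (1 : ℝ), P (s ^ a)) ↔ ∀ r ∈ Ioo (0 : ℝ) 1, P r := by
  refine ⟨fun h r hr => ?_, fun h s hs =>
    h _ ⟨Real.rpow_pos_of_pos (zero_lt_one.trans hs) a, Real.rpow_lt_one_of_one_lt_of_neg hs ha⟩⟩
  have hinv : 1 < r ^ a⁻¹ := Real.one_lt_rpow_of_pos_of_lt_one_of_neg hr.1 hr.2 (inv_lt_zero.mpr ha)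
  simpa [← Real.rpow_mul hr.1.le, inv_mul_cancel₀ ha.ne] using h _ hinv

theorem hasDerivAt_deriv_of_eqOn_comp_rpow_mul_rpow {U U' U'' W : ℝ → ℝ}
    (hU' : ∀ r ∈ Ioo (0 : ℝ) 1, HasDerivAt U (U' r) r)
    (hU'' : ∀ r ∈ Ioo (0 : ℝ) 1, HasDerivAt U' (U'' r) r)
    (hW : EqOn W (fun t => U (t ^ a) * t ^ c) (Ioi 1)) (ha : a < 0) (hs : 1 < s) :
    HasDerivAt W ((a * s ^ a * U' (s ^ a) + c * U (s ^ a)) * s ^ (c - 1)) s ∧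
      HasDerivAt (deriv W) ((a ^ 2 * (s ^ a) ^ 2 * U'' (s ^ a)
        + a * (a + 2 * c - 1) * s ^ a * U' (s ^ a) + c * (c - 1) * U (s ^ a)) * s ^ (c - 2)) s := by
  have hmem : ∀ t ∈ Ioi (1 : ℝ), t ^ a ∈ Ioo (0 : ℝ) 1 :=
    (forall_rpow_Ioi_one_iff_of_neg ha).mpr fun _ hr => hr
  have hW' : ∀ t ∈ Ioi (1 : ℝ),
      HasDerivAt W ((a * t ^ a * U' (t ^ a) + c * U (t ^ a)) * t ^ (c - 1)) t := fun t ht =>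
    (hasDerivAt_comp_rpow_mul_rpow (zero_lt_one.trans ht) (hU' _ (hmem t ht))).congr_of_eventuallyEq
      (eventuallyEq_of_mem (Ioi_mem_nhds ht) hW)
  refine ⟨hW' s hs, ?_⟩
  have hV : HasDerivAt (fun r => a * r * U' r + c * U r)
      (a * U' (s ^ a) + a * s ^ a * U'' (s ^ a) + c * U' (s ^ a)) (s ^ a) := by
    have hr := hmem s hs
    refine ((((hasDerivAt_id _).const_mul a).mul (hU'' _ hr)).add
      ((hU' _ hr).const_mul c)).congr_deriv ?_
    simp only [id, mul_one]
  have hW'' := hasDerivAt_comp_rpow_mul_rpow (c := c - 1) (V := fun r => a * r * U' r + c * U r)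
    (V' := fun r => a * U' r + a * r * U'' r + c * U' r) (zero_lt_one.trans hs) hV
  refine (hW''.congr_of_eventuallyEq (eventuallyEq_of_mem (Ioi_mem_nhds hs)
    fun t ht => (hW' t ht).deriv)).congr_deriv ?_
  rw [show c - 1 - 1 = c - 2 by ring]
  ring

end RpowSubstitution

section EulerExponents

variable {m β γ : ℝ}

theorem euler_indicial_roots (hm : 0 < ((m - 2) / 2) ^ 2 - (m - 1))
    (hγ : γ = -(m - 2) / 2 + Real.sqrt (((m - 2) / 2) ^ 2 - (m - 1)))
    (hβ : β = 2 * Real.sqrt (((m - 2) / 2) ^ 2 - (m - 1))) :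
    0 < β ∧ β - 2 * γ = m - 2 ∧ γ * (γ - β) = m - 1 := by
  have hsq := Real.sq_sqrt hm.le
  subst hγ hβ
  exact ⟨by positivity, by ring, by linear_combination -hsq⟩

theorem euler_coefficients_of_indicial_roots (hβ : β ≠ 0) (hsum : β - 2 * γ = m - 2)
    (hprod : γ * (γ - β) = m - 1) {r : ℝ} (hr : r ≠ 0) (u₀ u₁ u₂ : ℝ) :
    (-1 / β) ^ 2 * r ^ 2 * u₂ + -1 / β * (-1 / β + 2 * (γ / β) - 1) * r * u₁
        + γ / β * (γ / β - 1) * u₀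
      = (r / β) ^ 2 * (u₂ + (m - 1) / r * u₁ + (m - 1) / r ^ 2 * u₀) := by
  field_simp
  linear_combination (r * u₁) * hsum + u₀ * hprod

end EulerExponents

/-- Change of variables for the Euler differential inequality: with
`γₙ = -(n-2)/2 + √(((n-2)/2)² - (n-1))`, `βₙ = 2√(((n-2)/2)² - (n-1))`, and
`W(s) := U(s^{-1/βₙ}) · s^{γₙ/βₙ}`, the function `W` is twice differentiable on `(1,∞)`,
and `W'' ≤ 0` on `(1,∞)` if and only if
`U'' + ((n-1)/r) U' + ((n-1)/r²) U ≤ 0` on `(0,1)`. -/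
theorem concavity_substitution_euler_inequality
    (n : ℕ) (hn : 7 ≤ n)
    (γ β : ℝ)
    (hγ : γ = -((n : ℝ) - 2) / 2 + Real.sqrt ((((n : ℝ) - 2) / 2) ^ 2 - ((n : ℝ) - 1)))
    (hβ : β = 2 * Real.sqrt ((((n : ℝ) - 2) / 2) ^ 2 - ((n : ℝ) - 1)))
    (U U' U'' : ℝ → ℝ)
    (hU' : ∀ r ∈ Set.Ioc (0 : ℝ) 1, HasDerivAt U (U' r) r)
    (hU'' : ∀ r ∈ Set.Ioc (0 : ℝ) 1, HasDerivAt U' (U'' r) r)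
    (W : ℝ → ℝ)
    (hW : ∀ s ∈ Set.Ici (1 : ℝ), W s = U (s ^ (-1 / β)) * s ^ (γ / β)) :
    (∀ s ∈ Set.Ioi (1 : ℝ), DifferentiableAt ℝ W s ∧ DifferentiableAt ℝ (deriv W) s) ∧
    ((∀ s ∈ Set.Ioi (1 : ℝ), deriv (deriv W) s ≤ 0) ↔
      (∀ r ∈ Set.Ioo (0 : ℝ) 1,
        U'' r + (((n : ℝ) - 1) / r) * U' r + (((n : ℝ) - 1) / r ^ 2) * U r ≤ 0)) := by
  have hm : 0 < (((n : ℝ) - 2) / 2) ^ 2 - ((n : ℝ) - 1) := by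
    have : (7 : ℝ) ≤ n := by exact_mod_cast hn
    nlinarith
  obtain ⟨hβpos, hsum, hprod⟩ := euler_indicial_roots hm hγ hβ
  have ha : -1 / β < 0 := div_neg_of_neg_of_pos (by norm_num) hβpos
  have hW₂ : ∀ s ∈ Ioi (1 : ℝ), _ := fun s hs =>
    hasDerivAt_deriv_of_eqOn_comp_rpow_mul_rpow (fun r hr => hU' r (Ioo_subset_Ioc_self hr))
      (fun r hr => hU'' r (Ioo_subset_Ioc_self hr)) (fun t ht => hW t (Ioi_subset_Ici_self ht))
      ha hs
  refine ⟨fun s hs => ⟨(hW₂ s hs).1.differentiableAt, (hW₂ s hs).2.differentiableAt⟩, ?_⟩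
  rw [← forall_rpow_Ioi_one_iff_of_neg ha]
  refine forall₂_congr fun s hs => ?_
  have hs₀ : 0 < s := zero_lt_one.trans hs
  have hr : 0 < s ^ (-1 / β) := Real.rpow_pos_of_pos hs₀ _
  rw [(hW₂ s hs).2.deriv, euler_coefficients_of_indicial_roots hβpos.ne' hsum hprod hr.ne',
    mul_right_comm]
  exact smul_nonpos_iff_nonpos_of_pos_left (α := ℝ) (β := ℝ) (by positivity)
end

section
/- Let n ≥ 1 be an integer, let 0 ≤ a < b be real numbers, let ε ∈ [0,1), and let M : [a,b] → ℝ be a nondecreasing function with M(s) > 0 for every s ∈ (a,b]. Suppose that for Lebesgue-almost every s ∈ (a,b), M is differentiable at s and satisfies M(s)^{(n−1)/n} ≤ ε · M(s)^{(n−1)/n} + M'(s). Then for every t ∈ (a,b], one has M(t) ≥ ((1−ε)·(t−a)/n)^n. -/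
/-!
Put `G = M ^ (1/n)`. Where `M` is differentiable and positive, the differential inequality
reads `(1 - ε) M ^ (1 - 1/n) ≤ M'`, i.e. `G' = M' M ^ (1/n - 1) / n ≥ (1 - ε) / n`. For a
monotone function the integral of the a.e. derivative is at most the increment (the singular
part of its Stieltjes measure is nonnegative), so `G t - G a' ≥ (1 - ε)(t - a') / n` for
`a < a' < t`; since `G ≥ 0`, letting `a' → a` gives `G t ≥ (1 - ε)(t - a) / n`.
-/

open MeasureTheory Set

theorem Monotone.stieltjesFunction_measure_Ioo_le {g : ℝ → ℝ} (hg : Monotone g) (c d : ℝ) :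
    hg.stieltjesFunction.measure (Ioo c d) ≤ ENNReal.ofReal (g d - g c) := by
  rw [hg.stieltjesFunction.measure_Ioo]
  refine ENNReal.ofReal_le_ofReal (sub_le_sub ?_ ?_)
  · refine _root_.le_of_tendsto (hg.stieltjesFunction.mono.tendsto_leftLim d) ?_
    filter_upwards [self_mem_nhdsWithin] with y hy
    exact hg.rightLim_le hy
  · exact hg.le_rightLim le_rfl

theorem Monotone.mul_sub_le_sub_of_le_deriv {g : ℝ → ℝ} (hg : Monotone g) {c d k : ℝ}
    (hcd : c ≤ d) (h : ∀ᵐ x ∂volume.restrict (Ioo c d), k ≤ deriv g x) :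
    k * (d - c) ≤ g d - g c := by
  have hincr : 0 ≤ g d - g c := sub_nonneg.mpr (hg hcd)
  rcases lt_or_ge k 0 with hk | hk
  · nlinarith
  set μ := hg.stieltjesFunction.measure
  have hdensity : ∀ᵐ x ∂volume.restrict (Ioo c d), ENNReal.ofReal k ≤ μ.rnDeriv volume x := by
    filter_upwards [h, ae_restrict_of_ae hg.ae_hasDerivAt] with x hk hderiv
    rw [hderiv.deriv] at hk
    exact (ENNReal.ofReal_le_ofReal hk).trans ENNReal.ofReal_toReal_le
  rw [← ENNReal.ofReal_le_ofReal_iff hincr]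
  calc ENNReal.ofReal (k * (d - c))
      = ∫⁻ _ in Ioo c d, ENNReal.ofReal k := by
        rw [setLIntegral_const, Real.volume_Ioo, ENNReal.ofReal_mul hk]
    _ ≤ ∫⁻ x in Ioo c d, μ.rnDeriv volume x := lintegral_mono_ae hdensity
    _ ≤ μ (Ioo c d) := Measure.setLIntegral_rnDeriv_le _
    _ ≤ ENNReal.ofReal (g d - g c) := hg.stieltjesFunction_measure_Ioo_le c d

theorem MonotoneOn.mul_sub_le_sub_of_le_deriv {g : ℝ → ℝ} {c d k : ℝ}
    (hg : MonotoneOn g (Icc c d)) (hcd : c ≤ d)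
    (h : ∀ᵐ x ∂volume.restrict (Ioo c d), k ≤ deriv g x) :
    k * (d - c) ≤ g d - g c := by
  have hc : c ∈ Icc c d := left_mem_Icc.mpr hcd
  have hd : d ∈ Icc c d := right_mem_Icc.mpr hcd
  obtain ⟨f, hf, hfg⟩ := hg.exists_monotone_extension
    ⟨g c, forall_mem_image.mpr fun x hx ↦ hg hc hx hx.1⟩
    ⟨g d, forall_mem_image.mpr fun x hx ↦ hg hx hd hx.2⟩
  have hderiv : ∀ᵐ x ∂volume.restrict (Ioo c d), k ≤ deriv f x := by
    filter_upwards [h, ae_restrict_mem measurableSet_Ioo] with x hk hx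
    have hfg_near : f =ᶠ[nhds x] g := by
      filter_upwards [Icc_mem_nhds hx.1 hx.2] with y hy
      exact (hfg hy).symm
    rwa [hfg_near.deriv_eq]
  rw [hfg hc, hfg hd]
  exact hf.mul_sub_le_sub_of_le_deriv hcd hderiv

theorem MonotoneOn.mul_sub_le_sub_of_le_deriv_of_Ioc {g : ℝ → ℝ} {c d k L : ℝ}
    (hg : MonotoneOn g (Ioc c d)) (hcd : c < d) (hL : ∀ x ∈ Ioc c d, L ≤ g x)
    (h : ∀ᵐ x ∂volume.restrict (Ioo c d), k ≤ deriv g x) :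
    k * (d - c) ≤ g d - L := by
  have hclosed : IsClosed {x | k * (d - x) ≤ g d - L} :=
    isClosed_le (by fun_prop) continuous_const
  have hinner : Ioo c d ⊆ {x | k * (d - x) ≤ g d - L} := by
    intro c' hc'
    have hsub : Icc c' d ⊆ Ioc c d := Icc_subset_Ioc hc'.1 le_rfl
    have hstep := (hg.mono hsub).mul_sub_le_sub_of_le_deriv hc'.2.le
      (ae_restrict_of_ae_restrict_of_subset (Ioo_subset_Ioo_left hc'.1.le) h)
    have := hL c' ⟨hc'.1, hc'.2.le⟩
    simp only [mem_ofPred_eq]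
    linarith
  have hc : c ∈ closure (Ioo c d) := by
    rw [closure_Ioo hcd.ne]
    exact left_mem_Icc.mpr hcd.le
  exact hclosed.closure_subset_iff.mpr hinner hc

theorem mul_le_deriv_rpow_of_hasDerivAt {M : ℝ → ℝ} {m s c p : ℝ} (hM : HasDerivAt M m s)
    (hMs : 0 < M s) (hp : 0 ≤ p) (h : c * M s ^ (1 - p) ≤ m) :
    c * p ≤ deriv (fun x ↦ M x ^ p) s := by
  rw [(hM.rpow_const (Or.inl hMs.ne')).deriv]
  have hcancel : M s ^ (1 - p) * M s ^ (p - 1) = 1 := by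
    rw [← Real.rpow_add hMs, sub_add_sub_cancel, sub_self, Real.rpow_zero]
  calc c * p = c * M s ^ (1 - p) * (p * M s ^ (p - 1)) := by
        linear_combination (-(c * p)) * hcancel
    _ ≤ m * (p * M s ^ (p - 1)) := by gcongr
    _ = m * p * M s ^ (p - 1) := by ring

theorem mass_lower_bound_of_isoperimetric_diff_ineq_general
    (n : ℕ) (hn : 1 ≤ n)
    (a b : ℝ)
    (ε : ℝ) (hε : ε ∈ Set.Ico (0 : ℝ) 1)
    (M : ℝ → ℝ)
    (hmono : MonotoneOn M (Set.Icc a b))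
    (hpos : ∀ s ∈ Set.Ioc a b, 0 < M s)
    (hae : ∀ᵐ s ∂(volume.restrict (Set.Ioo a b)),
      DifferentiableAt ℝ M s ∧
        M s ^ (((n : ℝ) - 1) / n) ≤ ε * M s ^ (((n : ℝ) - 1) / n) + deriv M s) :
    ∀ t ∈ Set.Ioc a b, ((1 - ε) * (t - a) / n) ^ n ≤ M t := by
  intro t ht
  have hsub : Ioc a t ⊆ Ioc a b := Ioc_subset_Ioc_right ht.2
  have hexp : ((n : ℝ) - 1) / n = 1 - (n : ℝ)⁻¹ := by field_simp
  set G : ℝ → ℝ := fun s ↦ M s ^ (n : ℝ)⁻¹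
  have hGmono : MonotoneOn G (Ioc a t) := fun x hx y hy hxy ↦
    Real.rpow_le_rpow (hpos x (hsub hx)).le
      (hmono (Ioc_subset_Icc_self (hsub hx)) (Ioc_subset_Icc_self (hsub hy)) hxy) (by positivity)
  have hGderiv : ∀ᵐ s ∂volume.restrict (Ioo a t), (1 - ε) * (n : ℝ)⁻¹ ≤ deriv G s := by
    filter_upwards [ae_restrict_of_ae_restrict_of_subset (Ioo_subset_Ioo_right ht.2) hae,
      ae_restrict_mem measurableSet_Ioo] with s ⟨hdiff, hineq⟩ hs
    rw [hexp] at hineq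
    exact mul_le_deriv_rpow_of_hasDerivAt hdiff.hasDerivAt (hpos s (hsub (Ioo_subset_Ioc_self hs)))
      (by positivity) (by linarith)
  have hGt := hGmono.mul_sub_le_sub_of_le_deriv_of_Ioc ht.1
    (fun s hs ↦ Real.rpow_nonneg (hpos s (hsub hs)).le _) hGderiv
  calc ((1 - ε) * (t - a) / n) ^ n = ((1 - ε) * (n : ℝ)⁻¹ * (t - a)) ^ n := by ring
    _ ≤ G t ^ n := by
        have : 0 ≤ 1 - ε := by linarith [hε.2]
        have : 0 ≤ t - a := by linarith [ht.1]
        gcongr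
        linarith
    _ = M t := Real.rpow_inv_natCast_pow (hpos t ht).le (by omega)

/-- Integration of the Michael–Simon type isoperimetric differential inequality:
if `M : [a,b] → ℝ` is nondecreasing, positive on `(a,b]`, and for a.e. `s ∈ (a,b)` it is
differentiable with `M(s)^{(n-1)/n} ≤ ε·M(s)^{(n-1)/n} + M'(s)`, then
`M(t) ≥ ((1-ε)(t-a)/n)^n` for every `t ∈ (a,b]`. -/
theorem mass_lower_bound_of_isoperimetric_diff_ineq
    (n : ℕ) (hn : 1 ≤ n)
    (a b : ℝ) (ha : 0 ≤ a) (hab : a < b)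
    (ε : ℝ) (hε : ε ∈ Set.Ico (0 : ℝ) 1)
    (M : ℝ → ℝ)
    (hmono : MonotoneOn M (Set.Icc a b))
    (hpos : ∀ s ∈ Set.Ioc a b, 0 < M s)
    (hae : ∀ᵐ s ∂(volume.restrict (Set.Ioo a b)),
      DifferentiableAt ℝ M s ∧
        M s ^ (((n : ℝ) - 1) / n) ≤ ε * M s ^ (((n : ℝ) - 1) / n) + deriv M s) :
    ∀ t ∈ Set.Ioc a b, ((1 - ε) * (t - a) / n) ^ n ≤ M t :=
  mass_lower_bound_of_isoperimetric_diff_ineq_general n hn a b ε hε M hmono hpos hae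
end

section
/- Let d ≥ 1 be an integer, let Ω ⊆ ℝ^d be an open set, let V : Ω → ℝ be continuous, and let u : Ω → ℝ be a twice continuously differentiable function with u(x) > 0 for all x ∈ Ω and Δu(x) + V(x)·u(x) ≤ 0 for all x ∈ Ω. Then for every continuously differentiable function φ : ℝ^d → ℝ with compact support contained in Ω, one has ∫_Ω (‖∇φ(x)‖² − V(x)·φ(x)²) dx ≥ 0, and equality holds if and only if φ is identically zero. -/
open MeasureTheory

open Set Function InnerProductSpace Laplacian
open scoped Gradient

/-!
Write `φ = u ψ`. Pointwise `‖∇(uψ)‖² = u² ‖∇ψ‖² + ⟪∇u, ∇(uψ²)⟫`, and Green's identity turns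
the integral of the last term into `-∫ Δu · uψ²`. This gives the ground state representation
`∫ (‖∇φ‖² - Vφ²) = ∫ u² ‖∇ψ‖² - ∫ (Δu + Vu) uψ²`, whose two terms are nonnegative for a
positive supersolution `u`. If the form vanishes then `∇ψ = 0`, so `ψ` is constant, hence zero
by compact support.
-/

theorem ContDiffOn.contDiff_of_tsupport_subset {𝕜 E F : Type*} [NontriviallyNormedField 𝕜]
    [NormedAddCommGroup E] [NormedSpace 𝕜 E] [NormedAddCommGroup F] [NormedSpace 𝕜 F]
    {f : E → F} {s : Set E} {n : WithTop ℕ∞} (hf : ContDiffOn 𝕜 n f s) (hs : IsOpen s)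
    (hfs : tsupport f ⊆ s) : ContDiff 𝕜 n f := by
  refine contDiff_iff_contDiffAt.mpr fun x => ?_
  by_cases hx : x ∈ s
  · exact hf.contDiffAt (hs.mem_nhds hx)
  · exact contDiffAt_const.congr_of_eventuallyEq
      (notMem_tsupport_iff_eventuallyEq.mp fun h => hx (hfs h))

theorem HasCompactSupport.eq_zero_of_fderiv_eq_zero {E F : Type*} [NormedAddCommGroup E]
    [NormedSpace ℝ E] [Nontrivial E] [NormedAddCommGroup F] [NormedSpace ℝ F] {f : E → F}
    (hc : HasCompactSupport f) (hf : Differentiable ℝ f) (hf' : ∀ x, fderiv ℝ f x = 0) :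
    f = 0 := by
  have := NormedSpace.noncompactSpace ℝ E
  obtain ⟨y, hy⟩ := (Set.ne_univ_iff_exists_notMem _).mp hc.isCompact.ne_univ
  funext x
  rw [is_const_of_fderiv_eq_zero hf hf' x y, image_eq_zero_of_notMem_tsupport hy, Pi.zero_apply]

theorem ContinuousOn.integrable_of_forall_notMem_eq_zero {X : Type*} [TopologicalSpace X]
    [T2Space X] [MeasurableSpace X] [OpensMeasurableSpace X] {μ : Measure X}
    [IsFiniteMeasureOnCompacts μ] {K : Set X} {f : X → ℝ} (hf : ContinuousOn f K)
    (hK : IsCompact K) (hf0 : ∀ x ∉ K, f x = 0) : Integrable f μ :=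
  (hf.integrableOn_compact hK).integrable_of_forall_notMem_eq_zero hf0

section Gradient

variable {E : Type*} [NormedAddCommGroup E] [InnerProductSpace ℝ E] [CompleteSpace E]

theorem norm_gradient (f : E → ℝ) (x : E) : ‖∇ f x‖ = ‖fderiv ℝ f x‖ :=
  (toDual ℝ E).symm.norm_map _

theorem gradient_eq_zero_of_notMem_tsupport {f : E → ℝ} {x : E} (hx : x ∉ tsupport f) :
    ∇ f x = 0 := by
  rw [gradient, fderiv_of_notMem_tsupport ℝ hx, map_zero]

theorem ContDiffOn.continuousOn_gradient_of_isOpen {f : E → ℝ} {s : Set E}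
    {n : WithTop ℕ∞} (hf : ContDiffOn ℝ n f s) (hs : IsOpen s) (hn : 1 ≤ n) :
    ContinuousOn (∇ f) s :=
  (toDual ℝ E).symm.continuous.comp_continuousOn (hf.continuousOn_fderiv_of_isOpen hs hn)

theorem gradient_fun_mul {u ψ : E → ℝ} {x : E} (hu : DifferentiableAt ℝ u x)
    (hψ : DifferentiableAt ℝ ψ x) :
    ∇ (fun y => u y * ψ y) x = u x • ∇ ψ x + ψ x • ∇ u x := by
  simp only [gradient, fderiv_fun_mul hu hψ, map_add, map_smul]

theorem inner_gradient_eq_sum {ι : Type*} [Fintype ι] (b : OrthonormalBasis ι ℝ E)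
    (f g : E → ℝ) (x : E) :
    inner ℝ (∇ f x) (∇ g x) = ∑ i, fderiv ℝ f x (b i) * fderiv ℝ g x (b i) := by
  rw [← b.sum_inner_mul_inner]
  simp only [inner_gradient_left, inner_gradient_right, conj_trivial]

theorem norm_sq_gradient_mul {u ψ : E → ℝ} {x : E} (hu : DifferentiableAt ℝ u x)
    (hψ : DifferentiableAt ℝ ψ x) :
    ‖∇ (fun y => u y * ψ y) x‖ ^ 2
      = u x ^ 2 * ‖∇ ψ x‖ ^ 2 + inner ℝ (∇ u x) (∇ (fun y => u y * ψ y * ψ y) x) := by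
  rw [gradient_fun_mul (hu.fun_mul hψ) hψ, gradient_fun_mul hu hψ, norm_add_sq_real]
  simp only [inner_add_right, inner_smul_right, norm_smul, real_inner_self_eq_norm_sq,
    real_inner_comm (∇ u x), Real.norm_eq_abs, mul_pow, sq_abs]
  ring

end Gradient

theorem exists_contDiff_eq_mul_of_tsupport_subset {E : Type*} [NormedAddCommGroup E]
    [NormedSpace ℝ E] {Ω : Set E} {n : WithTop ℕ∞} {u φ : E → ℝ} (hΩ : IsOpen Ω)
    (hu : ContDiffOn ℝ n u Ω) (hu0 : ∀ x ∈ Ω, u x ≠ 0) (hφ : ContDiff ℝ n φ)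
    (hφc : HasCompactSupport φ) (hφΩ : tsupport φ ⊆ Ω) :
    ∃ ψ : E → ℝ, ContDiff ℝ n ψ ∧ HasCompactSupport ψ ∧ tsupport ψ ⊆ Ω ∧
      φ = fun x => u x * ψ x := by
  have hψφ : support (fun x => φ x / u x) ⊆ support φ :=
    (support_div φ u).trans_subset inter_subset_left
  have hψΩ : tsupport (fun x => φ x / u x) ⊆ Ω := (closure_mono hψφ).trans hφΩ
  refine ⟨fun x => φ x / u x, (hφ.contDiffOn.div hu hu0).contDiff_of_tsupport_subset hΩ hψΩ,
    hφc.mono hψφ, hψΩ, funext fun x => ?_⟩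
  by_cases hx : x ∈ Ω
  · exact (mul_div_cancel₀ _ (hu0 x hx)).symm
  · show φ x = u x * (φ x / u x)
    rw [image_eq_zero_of_notMem_tsupport fun h => hx (hφΩ h), zero_div, mul_zero]

section Laplacian

variable {E F : Type*} [NormedAddCommGroup E] [InnerProductSpace ℝ E] [FiniteDimensional ℝ E]
  [NormedAddCommGroup F] [NormedSpace ℝ F]

theorem laplacian_eq_sum_fderiv_fderiv_apply {ι : Type*} [Fintype ι]
    (b : OrthonormalBasis ι ℝ E) {u : E → F} {x : E} (hu : ContDiffAt ℝ 2 u x) :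
    Δ u x = ∑ i, fderiv ℝ (fun y => fderiv ℝ u y (b i)) x (b i) := by
  rw [laplacian_eq_iteratedFDeriv_orthonormalBasis u b]
  refine Finset.sum_congr rfl fun i _ => ?_
  rw [iteratedFDeriv_two_apply, fderiv_clm_apply
    ((hu.fderiv_right (m := 1) le_rfl).differentiableAt one_ne_zero) (differentiableAt_const _)]
  simp

theorem ContDiffOn.continuousOn_laplacian_of_isOpen {u : E → F} {Ω : Set E}
    (hu : ContDiffOn ℝ 2 u Ω) (hΩ : IsOpen Ω) : ContinuousOn (Δ u) Ω := by
  let b := stdOrthonormalBasis ℝ E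
  refine (continuousOn_finsetSum _ fun i _ => ?_).congr fun x hx =>
    laplacian_eq_sum_fderiv_fderiv_apply b (hu.contDiffAt (hΩ.mem_nhds hx))
  exact (((hu.fderiv_of_isOpen hΩ (by norm_num)).clm_apply contDiffOn_const
    ).continuousOn_fderiv_of_isOpen hΩ le_rfl).clm_apply continuousOn_const

end Laplacian

section Integral

variable {E : Type*} [NormedAddCommGroup E] [InnerProductSpace ℝ E] [FiniteDimensional ℝ E]
  [MeasurableSpace E] [BorelSpace E] {μ : Measure E} [μ.IsAddHaarMeasure] {Ω : Set E}

theorem setIntegral_mul_fderiv_eq_neg_fderiv_mul {f g : E → ℝ} (hΩ : IsOpen Ω)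
    (hf : ContDiffOn ℝ 1 f Ω) (hg : ContDiff ℝ 1 g) (hgc : HasCompactSupport g)
    (hgΩ : tsupport g ⊆ Ω) (v : E) :
    ∫ x in Ω, f x * fderiv ℝ g x v ∂μ = -∫ x in Ω, fderiv ℝ f x v * g x ∂μ := by
  -- `f` only needs to be differentiable on `tsupport g`, so no cutoff is required
  have hg0 : ∀ x ∉ tsupport g, g x = 0 := fun x => image_eq_zero_of_notMem_tsupport
  have hg'0 : ∀ x ∉ tsupport g, fderiv ℝ g x v = 0 := fun x hx => by
    simp [fderiv_of_notMem_tsupport ℝ hx]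
  have hf' : ContinuousOn (fun x => fderiv ℝ f x v) Ω :=
    (hf.continuousOn_fderiv_of_isOpen hΩ le_rfl).clm_apply continuousOn_const
  have hg' : Continuous (fun x => fderiv ℝ g x v) :=
    (hg.continuous_fderiv one_ne_zero).clm_apply continuous_const
  rw [setIntegral_eq_integral_of_forall_compl_eq_zero fun x hx => by
      rw [hg'0 x fun h => hx (hgΩ h), mul_zero],
    setIntegral_eq_integral_of_forall_compl_eq_zero fun x hx => by
      rw [hg0 x fun h => hx (hgΩ h), mul_zero]]
  exact integral_mul_fderiv_eq_neg_fderiv_mul_of_integrable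
    (((hf'.mono hgΩ).fun_mul hg.continuous.continuousOn).integrable_of_forall_notMem_eq_zero
      hgc.isCompact fun x hx => by rw [hg0 x hx, mul_zero])
    (((hf.continuousOn.mono hgΩ).fun_mul hg'.continuousOn).integrable_of_forall_notMem_eq_zero
      hgc.isCompact fun x hx => by rw [hg'0 x hx, mul_zero])
    (((hf.continuousOn.mono hgΩ).fun_mul hg.continuous.continuousOn
      ).integrable_of_forall_notMem_eq_zero hgc.isCompact fun x hx => by
        rw [hg0 x hx, mul_zero])
    (fun x hx => (hf.differentiableOn one_ne_zero).differentiableAt (hΩ.mem_nhds (hgΩ hx)))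
    (fun x _ => hg.differentiable one_ne_zero x)

theorem setIntegral_inner_gradient_eq_neg_laplacian_mul {u ξ : E → ℝ} (hΩ : IsOpen Ω)
    (hu : ContDiffOn ℝ 2 u Ω) (hξ : ContDiff ℝ 1 ξ) (hξc : HasCompactSupport ξ)
    (hξΩ : tsupport ξ ⊆ Ω) :
    ∫ x in Ω, inner ℝ (∇ u x) (∇ ξ x) ∂μ = -∫ x in Ω, Δ u x * ξ x ∂μ := by
  let b := stdOrthonormalBasis ℝ E
  have hu' : ∀ i, ContDiffOn ℝ 1 (fun y => fderiv ℝ u y (b i)) Ω := fun i =>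
    (hu.fderiv_of_isOpen hΩ (by norm_num)).clm_apply contDiffOn_const
  have hu'' : ∀ i,
      ContinuousOn (fun x => fderiv ℝ (fun y => fderiv ℝ u y (b i)) x (b i)) Ω := fun i =>
    ((hu' i).continuousOn_fderiv_of_isOpen hΩ le_rfl).clm_apply continuousOn_const
  have hξ' : ∀ i, Continuous (fun x => fderiv ℝ ξ x (b i)) := fun i =>
    (hξ.continuous_fderiv one_ne_zero).clm_apply continuous_const
  calc ∫ x in Ω, inner ℝ (∇ u x) (∇ ξ x) ∂μ
      = ∑ i, ∫ x in Ω, fderiv ℝ u x (b i) * fderiv ℝ ξ x (b i) ∂μ := by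
        simp only [inner_gradient_eq_sum b]
        refine integral_finsetSum _ fun i _ => Integrable.integrableOn ?_
        exact (((hu' i).continuousOn.mono hξΩ).fun_mul (hξ' i).continuousOn
          ).integrable_of_forall_notMem_eq_zero hξc.isCompact fun x hx => by
            simp [fderiv_of_notMem_tsupport ℝ hx]
    _ = ∑ i, -∫ x in Ω, fderiv ℝ (fun y => fderiv ℝ u y (b i)) x (b i) * ξ x ∂μ :=
        Finset.sum_congr rfl fun i _ =>
          setIntegral_mul_fderiv_eq_neg_fderiv_mul hΩ (hu' i) hξ hξc hξΩ (b i)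
    _ = -∫ x in Ω, (∑ i, fderiv ℝ (fun y => fderiv ℝ u y (b i)) x (b i)) * ξ x ∂μ := by
        simp only [Finset.sum_neg_distrib, Finset.sum_mul]
        rw [integral_finsetSum _ fun i _ => Integrable.integrableOn ?_]
        exact (((hu'' i).mono hξΩ).fun_mul hξ.continuous.continuousOn
          ).integrable_of_forall_notMem_eq_zero hξc.isCompact fun x hx => by
            rw [image_eq_zero_of_notMem_tsupport hx, mul_zero]
    _ = -∫ x in Ω, Δ u x * ξ x ∂μ := by
        congr 1
        refine setIntegral_congr_fun hΩ.measurableSet fun x hx => ?_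
        rw [laplacian_eq_sum_fderiv_fderiv_apply b (hu.contDiffAt (hΩ.mem_nhds hx))]

theorem integrable_mul_norm_sq_gradient {w ψ : E → ℝ} (hΩ : IsOpen Ω)
    (hw : ContinuousOn w Ω) (hψ : ContDiff ℝ 1 ψ) (hψc : HasCompactSupport ψ)
    (hψΩ : tsupport ψ ⊆ Ω) :
    Integrable (fun x => w x * ‖∇ ψ x‖ ^ 2) μ :=
  ((hw.fun_mul ((hψ.contDiffOn.continuousOn_gradient_of_isOpen hΩ le_rfl).norm.pow 2)).mono
    hψΩ).integrable_of_forall_notMem_eq_zero hψc.isCompact fun x hx => by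
      simp [gradient_eq_zero_of_notMem_tsupport hx]

theorem setIntegral_norm_sq_gradient_mul_sub_eq {u V ψ : E → ℝ} (hΩ : IsOpen Ω)
    (hV : ContinuousOn V Ω) (hu : ContDiffOn ℝ 2 u Ω) (hψ : ContDiff ℝ 1 ψ)
    (hψc : HasCompactSupport ψ) (hψΩ : tsupport ψ ⊆ Ω) :
    ∫ x in Ω, (‖∇ (fun y => u y * ψ y) x‖ ^ 2 - V x * (u x * ψ x) ^ 2) ∂μ
      = ∫ x in Ω, u x ^ 2 * ‖∇ ψ x‖ ^ 2 ∂μ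
        - ∫ x in Ω, (Δ u x + V x * u x) * (u x * ψ x * ψ x) ∂μ := by
  set ξ : E → ℝ := fun y => u y * ψ y * ψ y with hξ_def
  have hξ : ContDiff ℝ 1 ξ :=
    (((hu.of_le one_le_two).mul hψ.contDiffOn).contDiff_of_tsupport_subset hΩ
      (tsupport_mul_subset_right.trans hψΩ)).mul hψ
  have hξψ : tsupport ξ ⊆ tsupport ψ := tsupport_mul_subset_right
  have hξ0 : ∀ x ∉ tsupport ψ, ξ x = 0 := fun x hx => by
    simp [hξ_def, image_eq_zero_of_notMem_tsupport hx]
  have hpt : ∀ x ∈ Ω, ‖∇ (fun y => u y * ψ y) x‖ ^ 2 - V x * (u x * ψ x) ^ 2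
      = u x ^ 2 * ‖∇ ψ x‖ ^ 2 + (inner ℝ (∇ u x) (∇ ξ x) - V x * u x * ξ x) := by
    intro x hx
    rw [norm_sq_gradient_mul ((hu.differentiableOn two_ne_zero).differentiableAt
      (hΩ.mem_nhds hx)) (hψ.differentiable one_ne_zero x)]
    ring
  have hI : IntegrableOn (fun x => inner ℝ (∇ u x) (∇ ξ x)) Ω μ :=
    ((((hu.continuousOn_gradient_of_isOpen hΩ one_le_two).inner
      (hξ.contDiffOn.continuousOn_gradient_of_isOpen hΩ le_rfl)).mono hψΩ
      ).integrable_of_forall_notMem_eq_zero hψc.isCompact fun x hx => by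
        simp [gradient_eq_zero_of_notMem_tsupport fun h => hx (hξψ h)]).integrableOn
  have hξ_int : ∀ {f : E → ℝ}, ContinuousOn f Ω → IntegrableOn (fun x => f x * ξ x) Ω μ :=
    fun hf => (((hf.fun_mul hξ.continuous.continuousOn).mono hψΩ
      ).integrable_of_forall_notMem_eq_zero hψc.isCompact fun x hx => by
        simp [hξ0 x hx]).integrableOn
  have hVu : ContinuousOn (fun x => V x * u x) Ω := hV.mul hu.continuousOn
  rw [setIntegral_congr_fun hΩ.measurableSet hpt,
    integral_add (integrable_mul_norm_sq_gradient hΩ (hu.continuousOn.fun_pow 2) hψ hψc hψΩ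
      ).integrableOn (hI.sub' (hξ_int hVu)),
    integral_sub hI (hξ_int hVu), setIntegral_inner_gradient_eq_neg_laplacian_mul hΩ hu hξ
      hψc.mul_left (hξψ.trans hψΩ)]
  simp only [add_mul]
  rw [integral_add (hξ_int (hu.continuousOn_laplacian_of_isOpen hΩ)) (hξ_int hVu)]
  ring

theorem eq_zero_of_setIntegral_mul_norm_sq_gradient_eq_zero [Nontrivial E] {w ψ : E → ℝ}
    (hΩ : IsOpen Ω) (hw : ContinuousOn w Ω) (hw_pos : ∀ x ∈ Ω, 0 < w x)
    (hψ : ContDiff ℝ 1 ψ) (hψc : HasCompactSupport ψ) (hψΩ : tsupport ψ ⊆ Ω)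
    (h : ∫ x in Ω, w x * ‖∇ ψ x‖ ^ 2 ∂μ = 0) : ψ = 0 := by
  have hae : (fun x => w x * ‖∇ ψ x‖ ^ 2) =ᵐ[μ.restrict Ω] 0 :=
    (integral_eq_zero_iff_of_nonneg_ae (ae_restrict_of_forall_mem hΩ.measurableSet fun x hx =>
      by have := hw_pos x hx; positivity)
      (integrable_mul_norm_sq_gradient hΩ hw hψ hψc hψΩ).integrableOn).mp h
  have hzero := Measure.eqOn_open_of_ae_eq hae hΩ
    (hw.fun_mul ((hψ.contDiffOn.continuousOn_gradient_of_isOpen hΩ le_rfl).norm.pow 2))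
    continuousOn_const
  refine hψc.eq_zero_of_fderiv_eq_zero (hψ.differentiable one_ne_zero) fun x => ?_
  by_cases hx : x ∈ Ω
  · have hx0 : w x * ‖fderiv ℝ ψ x‖ ^ 2 = 0 := by
      simpa only [norm_gradient, Pi.zero_apply] using hzero hx
    simpa [(hw_pos x hx).ne'] using hx0
  · exact fderiv_of_notMem_tsupport ℝ fun h => hx (hψΩ h)

end Integral

/-- A positive supersolution of `Δu + V·u = 0` on an open set `Ω ⊆ ℝ^d` forces the
Schrödinger quadratic form `φ ↦ ∫_Ω (‖∇φ‖² − V·φ²)` to be nonnegative on compactly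
supported `C¹` functions `φ` with support in `Ω`, with equality iff `φ ≡ 0`.
Here the Laplacian is the trace of the Hessian, written as the sum of the pure second
partial derivatives. -/
theorem schrodinger_form_nonneg_of_positive_supersolution
    (d : ℕ) (hd : 1 ≤ d)
    (Ω : Set (EuclideanSpace ℝ (Fin d))) (hΩ : IsOpen Ω)
    (V : EuclideanSpace ℝ (Fin d) → ℝ) (hV : ContinuousOn V Ω)
    (u : EuclideanSpace ℝ (Fin d) → ℝ) (hu : ContDiffOn ℝ 2 u Ω)
    (hupos : ∀ x ∈ Ω, 0 < u x)
    (hsuper : ∀ x ∈ Ω,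
      (∑ i : Fin d,
          fderiv ℝ (fun y => fderiv ℝ u y (EuclideanSpace.single i 1)) x
            (EuclideanSpace.single i 1)) + V x * u x ≤ 0) :
    ∀ φ : EuclideanSpace ℝ (Fin d) → ℝ,
      ContDiff ℝ 1 φ → HasCompactSupport φ → tsupport φ ⊆ Ω →
      (0 ≤ ∫ x in Ω, (‖gradient φ x‖ ^ 2 - V x * (φ x) ^ 2)) ∧
      ((∫ x in Ω, (‖gradient φ x‖ ^ 2 - V x * (φ x) ^ 2)) = 0 ↔ ∀ x, φ x = 0) := by
  intro φ hφ hφc hφΩ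
  obtain ⟨ψ, hψ, hψc, hψΩ, rfl⟩ := exists_contDiff_eq_mul_of_tsupport_subset hΩ
    (hu.of_le one_le_two) (fun x hx => (hupos x hx).ne') hφ hφc hφΩ
  have hΔ : ∀ x ∈ Ω, Δ u x + V x * u x ≤ 0 := fun x hx => by
    rw [laplacian_eq_sum_fderiv_fderiv_apply (EuclideanSpace.basisFun (Fin d) ℝ)
      (hu.contDiffAt (hΩ.mem_nhds hx))]
    simpa only [EuclideanSpace.basisFun_apply] using hsuper x hx
  have hA : 0 ≤ ∫ x in Ω, u x ^ 2 * ‖∇ ψ x‖ ^ 2 :=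
    setIntegral_nonneg hΩ.measurableSet fun x _ => by positivity
  have hB : ∫ x in Ω, (Δ u x + V x * u x) * (u x * ψ x * ψ x) ≤ 0 :=
    setIntegral_nonpos hΩ.measurableSet fun x hx => mul_nonpos_of_nonpos_of_nonneg (hΔ x hx)
      (by rw [mul_assoc]; exact mul_nonneg (hupos x hx).le (mul_self_nonneg _))
  have hQ := setIntegral_norm_sq_gradient_mul_sub_eq (μ := volume) hΩ hV hu hψ hψc hψΩ
  beta_reduce
  refine ⟨by linarith, fun h => ?_, fun h => ?_⟩
  · have : Nonempty (Fin d) := ⟨⟨0, hd⟩⟩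
    have hψ0 := eq_zero_of_setIntegral_mul_norm_sq_gradient_eq_zero hΩ
      (hu.continuousOn.fun_pow 2) (fun x hx => by have := hupos x hx; positivity) hψ hψc hψΩ
      (by linarith)
    simp [hψ0]
  · rw [show (fun y => u y * ψ y) = 0 from funext h]
    simp [h, gradient]
end
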